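/- Let T be a finite tree of order n ≥ 2, let ξ be the number of support vertices of T, and let θ be the maximum number of leaves adjacent to a single support vertex of T. Then pd(T) ≤ ξ + θ − 1. -/

import Mathlib

/-!
Let `s₀` be a support vertex carrying `θ` leaves, and number the leaves at every support vertex
`s` by `0, …, ℓ(s) - 1`. The partition puts the leaf numbered `0` at each support vertex
`s ≠ s₀` into a singleton class, collects the leaves numbered `j` into one class for each
`j = 1, …, θ - 1`, and puts all remaining vertices into one further class: `ξ + θ - 1` classes.

A singleton class `{u}` at `s` measures `d(·, s) = d(·, u) - 1` away from `u`. In a tree, for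
`x ≠ y` there is a leaf `l` with `x` on the path from `l` to `y`, so the support vertex of `l` is
strictly closer to `x` than to `y`; this separates any two vertices of a common class except a
leaf at `s₀` and `s₀` itself, which every class missing that leaf separates.
-/

open SimpleGraph

variable {V : Type*}

/-- Distance from a vertex to a set of vertices: `min_{u ∈ P} d(v,u)`. -/
noncomputable def distSet (G : SimpleGraph V) (v : V) (P : Set V) : ℕ :=
  sInf ((G.dist v) '' P)

/-- An ordered partition of `V` into `t` (nonempty) classes, encoded by a surjective
map `c : V → Fin t`, is resolving if distinct vertices have distinct partition
representations, i.e. distinct vectors of distances to the classes. -/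
def IsResolvingPartition (G : SimpleGraph V) {t : ℕ} (c : V → Fin t) : Prop :=
  Function.Surjective c ∧
    ∀ u v : V, (∀ i : Fin t, distSet G u {x | c x = i} = distSet G v {x | c x = i}) → u = v

/-- The partition dimension: the least `t` admitting a resolving partition into `t` classes. -/
noncomputable def partitionDim (G : SimpleGraph V) : ℕ :=
  sInf {t : ℕ | ∃ c : V → Fin t, IsResolvingPartition G c}

/-- A set `S` is a resolving set if distinct vertices have distinct vectors of
distances to the elements of `S`. -/
def IsResolvingSet (G : SimpleGraph V) (S : Set V) : Prop :=
  ∀ u v : V, (∀ w ∈ S, G.dist u w = G.dist v w) → u = v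

/-- The metric dimension: the least cardinality of a resolving set. -/
noncomputable def metricDim (G : SimpleGraph V) : ℕ :=
  sInf {k : ℕ | ∃ S : Set V, S.ncard = k ∧ IsResolvingSet G S}

/-- A leaf is a vertex of degree one. -/
def IsLeaf (G : SimpleGraph V) (v : V) : Prop := (G.neighborSet v).ncard = 1

/-- A major vertex is a vertex of degree at least three. -/
def IsMajor (G : SimpleGraph V) (v : V) : Prop := 3 ≤ (G.neighborSet v).ncard

/-- A path graph: a tree in which every vertex has degree at most two. -/
def IsPathGraph (G : SimpleGraph V) : Prop :=
  G.IsTree ∧ ∀ v : V, (G.neighborSet v).ncard ≤ 2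

/-- `u` is a terminal vertex of the major vertex `v` if `u` is a leaf and
`d(u,v) < d(u,w)` for every other major vertex `w`. -/
def IsTerminalOf (G : SimpleGraph V) (u v : V) : Prop :=
  IsLeaf G u ∧ IsMajor G v ∧ ∀ w : V, IsMajor G w → w ≠ v → G.dist u v < G.dist u w

/-- The terminal degree of a vertex: its number of terminal vertices. -/
noncomputable def terminalDegree (G : SimpleGraph V) (v : V) : ℕ :=
  {u | IsTerminalOf G u v}.ncard

/-- An exterior major vertex: a major vertex with positive terminal degree. -/
def IsExteriorMajor (G : SimpleGraph V) (v : V) : Prop :=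
  IsMajor G v ∧ 0 < terminalDegree G v

/-- `n₁(G)`: the number of leaves. -/
noncomputable def numLeaves (G : SimpleGraph V) : ℕ := {v | IsLeaf G v}.ncard

/-- `ex(G)`: the number of exterior major vertices. -/
noncomputable def numExteriorMajor (G : SimpleGraph V) : ℕ := {v | IsExteriorMajor G v}.ncard

/-- A support vertex: a vertex adjacent to a leaf. -/
def IsSupport (G : SimpleGraph V) (v : V) : Prop := ∃ u, G.Adj v u ∧ IsLeaf G u

/-- `ξ(G)`: the number of support vertices. -/
noncomputable def numSupport (G : SimpleGraph V) : ℕ := {v | IsSupport G v}.ncard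

/-- `θ(G)`: the maximum number of leaves adjacent to a single support vertex. -/
noncomputable def maxLeavesAtSupport (G : SimpleGraph V) : ℕ :=
  sSup {n : ℕ | ∃ v, IsSupport G v ∧ n = {u | G.Adj v u ∧ IsLeaf G u}.ncard}

section Distance

variable {G : SimpleGraph V}

theorem SimpleGraph.Reachable.exists_adj_dist_add_one_eq {u w : V} (h : G.Reachable u w)
    (huw : u ≠ w) : ∃ v, G.Adj u v ∧ G.dist v w + 1 = G.dist u w := by
  obtain ⟨p, -, hp⟩ := h.exists_path_of_dist
  have hnil : ¬p.Nil := by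
    rw [Walk.not_nil_iff_lt_length, hp]
    exact h.pos_dist_of_ne huw
  refine ⟨p.snd, p.adj_snd hnil, le_antisymm ?_ ?_⟩
  · have := dist_le p.tail
    have := p.length_tail_add_one hnil
    omega
  · calc G.dist u w ≤ G.dist u p.snd + G.dist p.snd w :=
          (p.adj_snd hnil).reachable.dist_triangle_left w
      _ = G.dist p.snd w + 1 := by rw [dist_eq_one_iff_adj.mpr (p.adj_snd hnil), add_comm]

theorem SimpleGraph.IsAcyclic.eq_of_adj_of_dist_add_one_eq (hG : G.IsAcyclic) {l z₁ z₂ y : V}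
    (h₁ : G.Adj l z₁) (h₂ : G.Adj l z₂) (hd₁ : G.dist z₁ y + 1 = G.dist l y)
    (hd₂ : G.dist z₂ y + 1 = G.dist l y) : z₁ = z₂ := by
  have hly : G.Reachable l y := .of_dist_ne_zero (by omega)
  obtain ⟨q₁, -, hq₁⟩ := (h₁.symm.reachable.trans hly).exists_path_of_dist
  obtain ⟨q₂, -, hq₂⟩ := (h₂.symm.reachable.trans hly).exists_path_of_dist
  have hp₁ := (q₁.cons h₁).isPath_of_length_eq_dist (by simp [hq₁, hd₁])
  have hp₂ := (q₂.cons h₂).isPath_of_length_eq_dist (by simp [hq₂, hd₂])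
  have := congrArg (fun p : G.Path l y => p.1.snd) <|
    (hG.subsingleton_path l y).elim ⟨_, hp₁⟩ ⟨_, hp₂⟩
  simpa using this

lemma IsLeaf.eq_of_adj {u s t : V} (hu : IsLeaf G u) (hs : G.Adj s u)
    (ht : G.Adj t u) : s = t := by
  obtain ⟨a, ha⟩ := Set.ncard_eq_one.mp hu
  have hs' : s ∈ G.neighborSet u := hs.symm
  have ht' : t ∈ G.neighborSet u := ht.symm
  rw [ha] at hs' ht'
  exact hs'.trans ht'.symm

lemma IsLeaf.dist_eq_dist_add_one (hc : G.Connected) {u s w : V}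
    (hu : IsLeaf G u) (hs : G.Adj s u) (hw : w ≠ u) : G.dist w u = G.dist w s + 1 := by
  obtain ⟨v, hv, hvw⟩ := (hc u w).exists_adj_dist_add_one_eq hw.symm
  rw [dist_comm, ← hvw, hu.eq_of_adj hv.symm hs, dist_comm]

theorem SimpleGraph.IsTree.exists_isLeaf_dist_eq_add [Finite V] (hT : G.IsTree) {x y : V}
    (hxy : x ≠ y) :
    ∃ l, IsLeaf G l ∧ G.dist l y = G.dist l x + G.dist x y := by
  have hc := hT.connected
  set A := {z | G.dist z y = G.dist z x + G.dist x y}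
  obtain ⟨l, hlA, hmax⟩ := A.exists_max_image (G.dist · y) A.toFinite ⟨x, by simp [A]⟩
  refine ⟨l, ?_, hlA⟩
  have hly : l ≠ y := by
    rintro rfl
    have := hc.pos_dist_of_ne hxy
    simp only [A, Set.mem_ofPred_eq, dist_self] at hlA
    omega
  obtain ⟨z₀, hz₀, hdz₀⟩ := (hc l y).exists_adj_dist_add_one_eq hly
  suffices G.neighborSet l = {z₀} by simp [IsLeaf, this]
  refine Set.eq_singleton_iff_unique_mem.mpr ⟨hz₀, fun z (hz : G.Adj l z) => ?_⟩
  have hzl := hT.dist_eq_dist_add_one_of_adj y hz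
  rw [dist_comm (u := y) (v := l), dist_comm (u := y) (v := z)] at hzl
  rcases hzl with hzl | hzl
  · exact hT.isAcyclic.eq_of_adj_of_dist_add_one_eq hz hz₀ hzl.symm hdz₀
  · -- a neighbour farther from `y` than `l` would again lie beyond `x`
    have hzA : z ∈ A := by
      have := hc.dist_triangle (u := z) (v := x) (w := y)
      have := hc.dist_triangle (u := z) (v := l) (w := x)
      simp only [A, Set.mem_ofPred_eq] at hlA ⊢
      rw [dist_eq_one_iff_adj.mpr hz.symm] at this
      omega
    have := hmax z hzA
    omega

end Distance

section distSet

variable {G : SimpleGraph V} {P : Set V} {u v : V}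

lemma distSet_singleton : distSet G v {u} = G.dist v u := by
  simp [distSet]

lemma distSet_le_dist (hu : u ∈ P) : distSet G v P ≤ G.dist v u :=
  Nat.sInf_le ⟨u, hu, rfl⟩

lemma exists_mem_distSet_eq (hP : P.Nonempty) (v : V) :
    ∃ u ∈ P, distSet G v P = G.dist v u := by
  obtain ⟨u, hu, h⟩ := Nat.sInf_mem (hP.image (G.dist v))
  exact ⟨u, hu, h.symm⟩

lemma SimpleGraph.Connected.distSet_eq_zero_iff (hc : G.Connected) (hP : P.Nonempty) :
    distSet G v P = 0 ↔ v ∈ P := by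
  refine ⟨fun h => ?_, fun hv => Nat.eq_zero_of_le_zero ?_⟩
  · obtain ⟨u, hu, hvu⟩ := exists_mem_distSet_eq hP v
    rwa [hc.dist_eq_zero_iff.mp (hvu.symm.trans h)]
  · simpa using distSet_le_dist (G := G) (v := v) hv

lemma IsLeaf.distSet_eq_distSet_add_one (hc : G.Connected) {s : V} (hu : IsLeaf G u)
    (hs : G.Adj s u) (hP : P.Nonempty) (huP : u ∉ P) : distSet G u P = distSet G s P + 1 := by
  apply le_antisymm
  · obtain ⟨w, hw, hsw⟩ := exists_mem_distSet_eq hP s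
    calc distSet G u P ≤ G.dist u w := distSet_le_dist hw
      _ ≤ G.dist u s + G.dist s w := hc.dist_triangle
      _ = distSet G s P + 1 := by rw [dist_eq_one_iff_adj.mpr hs.symm, hsw, add_comm]
  · obtain ⟨w, hw, huw⟩ := exists_mem_distSet_eq hP u
    have hwu : w ≠ u := fun h => huP (h ▸ hw)
    rw [huw, dist_comm, hu.dist_eq_dist_add_one hc hs hwu, dist_comm]
    exact Nat.add_le_add_right (distSet_le_dist hw) 1

end distSet

section Leaves

variable {G : SimpleGraph V} {s u : V}

def leavesAt (G : SimpleGraph V) (s : V) : Set V := {u | G.Adj s u ∧ IsLeaf G u}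

/-- For a non-leaf `u` this is an arbitrary neighbour, or `u` itself if there is none. -/
noncomputable def leafSupport (G : SimpleGraph V) (u : V) : V :=
  @Classical.epsilon V ⟨u⟩ (G.Adj · u)

lemma IsLeaf.adj_leafSupport (hu : IsLeaf G u) : G.Adj (leafSupport G u) u := by
  obtain ⟨a, ha⟩ := Set.ncard_eq_one.mp hu
  have : G.Adj a u := (ha ▸ Set.mem_singleton a : a ∈ G.neighborSet u).symm
  exact @Classical.epsilon_spec V (G.Adj · u) ⟨a, this⟩

lemma IsLeaf.leafSupport_eq (hu : IsLeaf G u) (hs : G.Adj s u) : leafSupport G u = s :=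
  hu.eq_of_adj hu.adj_leafSupport hs

lemma IsLeaf.mem_leavesAt_leafSupport (hu : IsLeaf G u) : u ∈ leavesAt G (leafSupport G u) :=
  ⟨hu.adj_leafSupport, hu⟩

lemma leafSupport_eq_of_mem_leavesAt (hu : u ∈ leavesAt G s) : leafSupport G u = s :=
  hu.2.leafSupport_eq hu.1

def IsLeafNumbering (G : SimpleGraph V) (r : V → ℕ) : Prop :=
  ∀ s, Set.BijOn r (leavesAt G s) (Set.Iio (leavesAt G s).ncard)

lemma exists_isLeafNumbering [Finite V] (G : SimpleGraph V) : ∃ r, IsLeafNumbering G r := by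
  have hbij (s : V) :
      ∃ f : V → ℕ, Set.BijOn f (leavesAt G s) (Set.Iio (leavesAt G s).ncard) :=
    (leavesAt G s).toFinite.exists_bijOn_of_encard_eq <| by
      rw [← (leavesAt G s).toFinite.cast_ncard_eq, ← (Set.finite_Iio _).cast_ncard_eq,
        Set.ncard_Iio_nat]
  choose f hf using hbij
  exact ⟨fun u => f (leafSupport G u) u, fun s =>
    (hf s).congr fun u hu => by simp only [leafSupport_eq_of_mem_leavesAt hu]⟩

namespace IsLeafNumbering

variable {r : V → ℕ}

lemma injOn (hr : IsLeafNumbering G r) (s : V) : Set.InjOn r (leavesAt G s) := (hr s).injOn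

lemma exists_eq_zero (hr : IsLeafNumbering G r) (hs : IsSupport G s) :
    ∃ u ∈ leavesAt G s, r u = 0 := by
  obtain ⟨u, hu⟩ : (leavesAt G s).Nonempty := hs
  have hpos : 0 < (leavesAt G s).ncard := Nat.zero_lt_of_lt ((hr s).mapsTo hu)
  exact (hr s).surjOn (Set.mem_Iio.mpr hpos)

lemma lt_ncard_leavesAt (hr : IsLeafNumbering G r) (hu : IsLeaf G u) :
    r u < (leavesAt G (leafSupport G u)).ncard :=
  (hr _).mapsTo hu.mem_leavesAt_leafSupport

end IsLeafNumbering

lemma bddAbove_ncard_leavesAt [Finite V] (G : SimpleGraph V) :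
    BddAbove {n : ℕ | ∃ v, IsSupport G v ∧ n = {u | G.Adj v u ∧ IsLeaf G u}.ncard} :=
  ⟨Nat.card V, by rintro n ⟨v, -, rfl⟩; exact Set.ncard_le_card _⟩

lemma ncard_leavesAt_le_maxLeavesAtSupport [Finite V] (hs : IsSupport G s) :
    (leavesAt G s).ncard ≤ maxLeavesAtSupport G :=
  le_csSup (bddAbove_ncard_leavesAt G) ⟨s, hs, rfl⟩

lemma exists_isSupport_ncard_leavesAt_eq [Finite V] (hs : IsSupport G s) :
    ∃ s₀, IsSupport G s₀ ∧ (leavesAt G s₀).ncard = maxLeavesAtSupport G := by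
  have hne : {n : ℕ | ∃ v, IsSupport G v ∧ n = (leavesAt G v).ncard}.Nonempty :=
    ⟨_, s, hs, rfl⟩
  obtain ⟨s₀, hs₀, h⟩ := Nat.sSup_mem hne (bddAbove_ncard_leavesAt G)
  exact ⟨s₀, hs₀, h.symm⟩

theorem SimpleGraph.IsTree.exists_support_dist_eq_add [Finite V] (hT : G.IsTree)
    {x y : V} (hxy : x ≠ y) (hx : ¬IsLeaf G x) :
    ∃ l s, G.Adj s l ∧ IsLeaf G l ∧ l ≠ y ∧ G.dist y s = G.dist x s + G.dist x y := by
  obtain ⟨l, hl, hd⟩ := hT.exists_isLeaf_dist_eq_add hxy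
  have hly : l ≠ y := by
    rintro rfl
    have := hT.connected.pos_dist_of_ne hxy
    rw [dist_self] at hd
    omega
  refine ⟨l, leafSupport G l, hl.adj_leafSupport, hl, hly, ?_⟩
  have hdy := hl.dist_eq_dist_add_one hT.connected hl.adj_leafSupport hly.symm
  have hdx := hl.dist_eq_dist_add_one hT.connected hl.adj_leafSupport
    (show x ≠ l by rintro rfl; exact hx hl)
  rw [dist_comm (u := l), dist_comm (u := l), hdy, hdx] at hd
  omega

end Leaves

section Representation

variable {ι : Type*}

def SameRepr (G : SimpleGraph V) (c : V → ι) (x y : V) : Prop :=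
  ∀ i, distSet G x {w | c w = i} = distSet G y {w | c w = i}

variable {G : SimpleGraph V} {c : V → ι} {x y : V}

lemma SameRepr.symm (h : SameRepr G c x y) : SameRepr G c y x := fun i => (h i).symm

lemma SameRepr.color_eq (hc : G.Connected) (h : SameRepr G c x y) : c x = c y := by
  have hne : {w | c w = c x}.Nonempty := ⟨x, rfl⟩
  exact ((hc.distSet_eq_zero_iff hne).mp <|
    (h (c x)).symm.trans ((hc.distSet_eq_zero_iff hne).mpr rfl)).symm

lemma partitionDim_le_ncard_range [Finite V] (c : V → ι)
    (hc : ∀ x y, SameRepr G c x y → x = y) : partitionDim G ≤ (Set.range c).ncard := by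
  have : Finite (Set.range c) := Set.finite_range c |>.to_subtype
  let e : Set.range c ≃ Fin (Set.range c).ncard :=
    (Finite.equivFin _).trans (finCongr (Nat.card_coe_set_eq _))
  refine Nat.sInf_le ⟨e ∘ Set.rangeFactorization c,
    e.surjective.comp Set.rangeFactorization_surjective, fun x y h => hc x y fun i => ?_⟩
  by_cases hi : i ∈ Set.range c
  · have hclass : {w | c w = i} = {w | e (Set.rangeFactorization c w) = e ⟨i, hi⟩} := by
      ext w
      simp [Set.rangeFactorization, Subtype.ext_iff]
    rw [hclass]
    exact h _
  · have hclass : {w | c w = i} = ∅ := Set.eq_empty_of_forall_notMem fun w hw => hi ⟨w, hw⟩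
    simp [hclass, distSet]

end Representation

section LeafColoring

variable {G : SimpleGraph V} {s₀ : V} {r : V → ℕ}

/-- Non-leaves and the leaf numbered `0` at `s₀` form the class `inl s₀`; the leaf numbered `0`
at another support vertex `s` is alone in the class `inl s`; the leaves numbered `j ≥ 1` at all
support vertices together form the class `inr j`. -/
noncomputable def leafColoring (G : SimpleGraph V) (s₀ : V) (r : V → ℕ) (v : V) : V ⊕ ℕ :=
  open Classical in
  if IsLeaf G v then if r v = 0 then .inl (leafSupport G v) else .inr (r v) else .inl s₀

lemma leafColoring_eq_inl_iff {s v : V} :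
    leafColoring G s₀ r v = .inl s ↔
      v ∈ leavesAt G s ∧ r v = 0 ∨ ¬IsLeaf G v ∧ s = s₀ := by
  unfold leafColoring
  by_cases hv : IsLeaf G v
  · by_cases hr : r v = 0
    · simp only [hv, hr, if_true, Sum.inl.injEq, leavesAt, Set.mem_ofPred_eq, and_true,
        not_true_eq_false, false_and, or_false]
      exact ⟨fun h => h ▸ hv.adj_leafSupport, hv.leafSupport_eq⟩
    · simp [hv, hr]
  · simp only [hv, if_false, Sum.inl.injEq, leavesAt, Set.mem_ofPred_eq, and_false, false_and,
      not_false_eq_true, true_and, false_or, eq_comm]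

lemma leafColoring_eq_inr_iff {j : ℕ} {v : V} :
    leafColoring G s₀ r v = .inr j ↔ IsLeaf G v ∧ r v = j ∧ j ≠ 0 := by
  unfold leafColoring
  by_cases hv : IsLeaf G v
  · by_cases hr : r v = 0
    · simp [hv, hr]; omega
    · simp [hv, hr]; omega
  · simp [hv]

variable {x y : V}

lemma SameRepr.dist_eq_of_isSupport (hc : G.Connected) (hr : IsLeafNumbering G r)
    (h : SameRepr G (leafColoring G s₀ r) x y) {s : V} (hs : IsSupport G s) (hs₀ : s ≠ s₀)
    (hx : leafColoring G s₀ r x ≠ .inl s) (hy : leafColoring G s₀ r y ≠ .inl s) :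
    G.dist x s = G.dist y s := by
  obtain ⟨u, hu, hu0⟩ := hr.exists_eq_zero hs
  have hclass : {w | leafColoring G s₀ r w = .inl s} = {u} := by
    ext w
    simp only [Set.mem_ofPred_eq, Set.mem_singleton_iff, leafColoring_eq_inl_iff, hs₀,
      and_false, or_false]
    exact ⟨fun ⟨hw, hw0⟩ => hr.injOn s hw hu (hw0.trans hu0.symm),
      fun hw => hw ▸ ⟨hu, hu0⟩⟩
  have hcu : leafColoring G s₀ r u = .inl s := leafColoring_eq_inl_iff.mpr (.inl ⟨hu, hu0⟩)
  have hdu := h (.inl s)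
  rw [hclass, distSet_singleton, distSet_singleton,
    hu.2.dist_eq_dist_add_one hc hu.1 (by rintro rfl; exact hx hcu),
    hu.2.dist_eq_dist_add_one hc hu.1 (by rintro rfl; exact hy hcu)] at hdu
  omega

lemma SameRepr.eq_of_leafColoring_eq_inr (hT : G.IsTree) (hr : IsLeafNumbering G r)
    (h : SameRepr G (leafColoring G s₀ r) x y) {j : ℕ} (hx : leafColoring G s₀ r x = .inr j) :
    x = y := by
  have hy : leafColoring G s₀ r y = .inr j := (h.color_eq hT.connected) ▸ hx
  obtain ⟨hxl, hrx, -⟩ := leafColoring_eq_inr_iff.mp hx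
  obtain ⟨hyl, hry, -⟩ := leafColoring_eq_inr_iff.mp hy
  by_contra hxy
  have hsupp : leafSupport G x ≠ leafSupport G y := fun hs =>
    hxy (hr.injOn _ hxl.mem_leavesAt_leafSupport (hs ▸ hyl.mem_leavesAt_leafSupport)
      (hrx.trans hry.symm))
  wlog hs₀ : leafSupport G x ≠ s₀ generalizing x y
  · exact this h.symm hy hx hyl hry hxl hrx (Ne.symm hxy) hsupp.symm
      fun e => hsupp ((not_not.mp hs₀).trans e.symm)
  have hd := h.dist_eq_of_isSupport hT.connected hr ⟨x, hxl.adj_leafSupport, hxl⟩ hs₀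
    (by simp [hx]) (by simp [hy])
  rw [dist_eq_one_iff_adj.mpr hxl.adj_leafSupport.symm] at hd
  exact hsupp (hyl.leafSupport_eq (dist_eq_one_iff_adj.mp hd.symm).symm).symm

lemma SameRepr.isLeaf_of_isLeaf [Finite V] (hT : G.IsTree) (hr : IsLeafNumbering G r)
    (h : SameRepr G (leafColoring G s₀ r) x y) (hx : IsLeaf G x) : IsLeaf G y := by
  have hc := hT.connected
  by_contra hy
  have hcy : leafColoring G s₀ r y = .inl s₀ := leafColoring_eq_inl_iff.mpr (.inr ⟨hy, rfl⟩)
  have hcx := (h.color_eq hc).trans hcy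
  obtain ⟨hxs₀, hrx⟩ : x ∈ leavesAt G s₀ ∧ r x = 0 :=
    (leafColoring_eq_inl_iff.mp hcx).resolve_right fun h' => h'.1 hx
  have hyx : y ≠ x := fun e => hy (e ▸ hx)
  obtain ⟨l, s, hsl, hl, hlx, hd⟩ := hT.exists_support_dist_eq_add hyx hy
  have hpos := hc.pos_dist_of_ne hyx
  by_cases hs : s = s₀
  · -- then `y` is the support vertex of `x`, and the class of any other leaf separates them
    subst hs
    have hxs : G.dist x s = 1 := dist_eq_one_iff_adj.mpr hxs₀.1.symm
    obtain rfl : y = s := hc.dist_eq_zero_iff.mp (by omega)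
    set C := {w | leafColoring G y r w = leafColoring G y r l}
    have hxC : x ∉ C := by
      intro hcl
      have hcl' : leafColoring G y r l = .inl y := hcl.symm.trans hcx
      obtain ⟨hly, hrl⟩ := (leafColoring_eq_inl_iff.mp hcl').resolve_right fun h' => h'.1 hl
      exact hlx (hr.injOn y hly hxs₀ (hrl.trans hrx.symm))
    have := hx.distSet_eq_distSet_add_one hc hxs₀.1 (P := C) ⟨l, rfl⟩ hxC
    have : distSet G x C = distSet G y C := h _
    omega
  · have := h.dist_eq_of_isSupport hc hr ⟨l, hsl, hl⟩ hs (by simp [hcx, Ne.symm hs])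
      (by simp [hcy, Ne.symm hs])
    omega

lemma SameRepr.eq_of_not_isLeaf [Finite V] (hT : G.IsTree) (hr : IsLeafNumbering G r)
    (h : SameRepr G (leafColoring G s₀ r) x y) (hx : ¬IsLeaf G x) (hy : ¬IsLeaf G y) :
    x = y := by
  have hc := hT.connected
  by_contra hxy
  obtain ⟨lx, sx, hsx, hlx, -, hdx⟩ := hT.exists_support_dist_eq_add hxy hx
  obtain ⟨ly, sy, hsy, hly, -, hdy⟩ := hT.exists_support_dist_eq_add (Ne.symm hxy) hy
  have hpos := hc.pos_dist_of_ne hxy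
  rw [dist_comm (u := y) (v := x)] at hdy
  have hcx : leafColoring G s₀ r x = .inl s₀ := leafColoring_eq_inl_iff.mpr (.inr ⟨hx, rfl⟩)
  have hcy : leafColoring G s₀ r y = .inl s₀ := leafColoring_eq_inl_iff.mpr (.inr ⟨hy, rfl⟩)
  have hsep {s : V} (hs : IsSupport G s) (hs₀ : s ≠ s₀) : G.dist x s = G.dist y s :=
    h.dist_eq_of_isSupport hc hr hs hs₀ (by simp [hcx, Ne.symm hs₀])
      (by simp [hcy, Ne.symm hs₀])
  by_cases hsx₀ : sx = s₀
  · have hsy₀ : sy ≠ s₀ := by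
      rintro rfl
      rw [hsx₀] at hdx
      omega
    have := hsep ⟨ly, hsy, hly⟩ hsy₀
    omega
  · have := hsep ⟨lx, hsx, hlx⟩ hsx₀
    omega

theorem SameRepr.eq_of_leafColoring [Finite V] (hT : G.IsTree) (hr : IsLeafNumbering G r)
    (h : SameRepr G (leafColoring G s₀ r) x y) : x = y := by
  rcases hcx : leafColoring G s₀ r x with s | j
  · by_cases hx : IsLeaf G x
    · have hy := h.isLeaf_of_isLeaf hT hr hx
      have hcy : leafColoring G s₀ r y = .inl s := (h.color_eq hT.connected) ▸ hcx
      obtain ⟨hxs, hrx⟩ := (leafColoring_eq_inl_iff.mp hcx).resolve_right fun h' => h'.1 hx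
      obtain ⟨hys, hry⟩ := (leafColoring_eq_inl_iff.mp hcy).resolve_right fun h' => h'.1 hy
      exact hr.injOn s hxs hys (hrx.trans hry.symm)
    · exact h.eq_of_not_isLeaf hT hr hx fun hy => hx (h.symm.isLeaf_of_isLeaf hT hr hy)
  · exact h.eq_of_leafColoring_eq_inr hT hr hcx

lemma ncard_range_leafColoring_le [Finite V] (hs₀ : IsSupport G s₀) {θ : ℕ}
    (hr : ∀ v, IsLeaf G v → r v < θ) :
    (Set.range (leafColoring G s₀ r)).ncard ≤ numSupport G + (θ - 1) := by
  have hsub : Set.range (leafColoring G s₀ r) ⊆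
      Sum.inl '' {s | IsSupport G s} ∪ Sum.inr '' Set.Ico 1 θ := by
    rintro _ ⟨v, rfl⟩
    rcases hcv : leafColoring G s₀ r v with s | j
    · refine .inl ⟨s, ?_, rfl⟩
      rcases leafColoring_eq_inl_iff.mp hcv with ⟨hv, -⟩ | ⟨-, rfl⟩
      · exact ⟨v, hv⟩
      · exact hs₀
    · obtain ⟨hv, rfl, hj⟩ := leafColoring_eq_inr_iff.mp hcv
      exact .inr ⟨r v, ⟨Nat.one_le_iff_ne_zero.mpr hj, hr v hv⟩, rfl⟩
  calc (Set.range (leafColoring G s₀ r)).ncard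
      ≤ (Sum.inl '' {s | IsSupport G s} ∪ Sum.inr '' Set.Ico 1 θ).ncard :=
        Set.ncard_le_ncard hsub (((Set.toFinite _).image _).union ((Set.finite_Ico 1 θ).image _))
    _ ≤ (Sum.inl '' {s | IsSupport G s}).ncard +
          (Sum.inr '' Set.Ico 1 θ : Set (V ⊕ ℕ)).ncard :=
        Set.ncard_union_le _ _
    _ = numSupport G + (θ - 1) := by
        rw [Set.ncard_image_of_injective _ Sum.inl_injective,
          Set.ncard_image_of_injective _ Sum.inr_injective, Set.ncard_Ico_nat, numSupport]

end LeafColoring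

/-- For any tree of order at least two, `pd(T) ≤ ξ + θ - 1`. -/
theorem partitionDim_le_xi_add_theta_sub_one {V : Type*} [Fintype V] (G : SimpleGraph V)
    (hT : G.IsTree) (hV : 2 ≤ Fintype.card V) :
    partitionDim G ≤ numSupport G + maxLeavesAtSupport G - 1 := by
  obtain ⟨x, y, hxy⟩ := Fintype.exists_pair_of_one_lt_card hV
  obtain ⟨l, hl, -⟩ := hT.exists_isLeaf_dist_eq_add hxy
  obtain ⟨s₀, hs₀, hθ⟩ :=
    exists_isSupport_ncard_leavesAt_eq (G := G) ⟨l, hl.adj_leafSupport, hl⟩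
  obtain ⟨r, hr⟩ := exists_isLeafNumbering G
  have hrθ (v : V) (hv : IsLeaf G v) : r v < maxLeavesAtSupport G :=
    (hr.lt_ncard_leavesAt hv).trans_le
      (ncard_leavesAt_le_maxLeavesAtSupport ⟨v, hv.adj_leafSupport, hv⟩)
  have hθpos : 0 < maxLeavesAtSupport G := hθ ▸ (Set.ncard_pos (Set.toFinite _)).mpr hs₀
  calc partitionDim G ≤ (Set.range (leafColoring G s₀ r)).ncard :=
        partitionDim_le_ncard_range _ fun _ _ h => h.eq_of_leafColoring hT hr
    _ ≤ numSupport G + (maxLeavesAtSupport G - 1) := ncard_range_leafColoring_le hs₀ hrθ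
    _ = numSupport G + maxLeavesAtSupport G - 1 := by omega
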